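/- arXiv:2002.03414 — 3 statements merged into one kernel-verified Lean document; each statement's English description precedes it below -/
import Mathlib

section
/- A cdf F has tail function 1 - F regularly varying at infinity with index -α (α > 0) if and only if the tail quantile function U(t) = Q(1 - 1/t) is regularly varying at infinity with index 1/α, where Q is the quantile function of F. -/
open Filter

/-- Inversion lemma for regular variation: if `V` is eventually strictly
monotone, `W` is an eventual right inverse tending to infinity, and `V` is
regularly varying with index `β > 0`, then `W` is regularly varying with
index `1/β`. -/
lemma regVar_of_inverse (V W : ℝ → ℝ) (β : ℝ) (hβ : 0 < β) (S0 : ℝ)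
    (hmono : ∀ ⦃s t : ℝ⦄, S0 ≤ s → s < t → V s < V t)
    (hVW : ∀ᶠ s in atTop, V (W s) = s)
    (hW : Tendsto W atTop atTop)
    (h4 : ∀ x > (0:ℝ), Tendsto (fun t => V (t * x) / V t) atTop (nhds (x ^ β))) :
    ∀ x > (0:ℝ), Tendsto (fun t => W (t * x) / W t) atTop (nhds (x ^ (1 / β))) := by
  intro x hx
  have hL : (0:ℝ) < x ^ (1/β) := Real.rpow_pos_of_pos hx _
  have hLβ : (x ^ (1/β)) ^ β = x := by
    rw [← Real.rpow_mul hx.le, one_div, inv_mul_cancel₀ hβ.ne', Real.rpow_one]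
  have hmulx : Tendsto (fun t : ℝ => t * x) atTop atTop :=
    tendsto_id.atTop_mul_const hx
  have hWx : Tendsto (fun t => W (t * x)) atTop atTop := hW.comp hmulx
  rw [tendsto_order]
  constructor
  · -- lower bound: for c < x^(1/β), eventually c < W(t*x)/W t
    intro c hc
    rcases le_or_gt c 0 with hc0 | hc0
    · filter_upwards [hW.eventually (eventually_gt_atTop 0),
        hWx.eventually (eventually_gt_atTop 0)] with t h1 h2
      exact lt_of_le_of_lt hc0 (div_pos h2 h1)
    · have hcβ : c ^ β < x := by
        calc c ^ β < (x ^ (1/β)) ^ β := Real.rpow_lt_rpow hc0.le hc hβ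
        _ = x := hLβ
      have hev : ∀ᶠ s in atTop, V (s * c) / V s < x :=
        (h4 c hc0).eventually_lt_const hcβ
      filter_upwards [hVW, hmulx.eventually hVW, hW.eventually hev,
        hWx.eventually (eventually_ge_atTop S0),
        hW.eventually (eventually_gt_atTop 0),
        eventually_gt_atTop 0] with t h1 h2 h3 h5 h6 h7
      -- h1 : V (W t) = t, h2 : V (W (t * x)) = t * x,
      -- h3 : V (W t * c) / V (W t) < x, h5 : S0 ≤ W (t*x), h6 : 0 < W t, h7 : 0 < t
      have hVWt : (0:ℝ) < V (W t) := h1.symm ▸ h7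
      have key : V (W t * c) < V (W (t * x)) := by
        have := (div_lt_iff₀ hVWt).1 h3
        rw [h1] at this
        rw [h2]; linarith
      have hlt : W t * c < W (t * x) := by
        by_contra hle
        push_neg at hle
        rcases eq_or_lt_of_le hle with h | h
        · rw [h] at key; exact lt_irrefl _ key
        · exact absurd key (not_lt.2 (hmono h5 h).le)
      rw [lt_div_iff₀ h6]; linarith
  · -- upper bound
    intro c hc
    have hc0 : (0:ℝ) < c := hL.trans hc
    have hcβ : x < c ^ β := by
      calc x = (x ^ (1/β)) ^ β := hLβ.symm
      _ < c ^ β := Real.rpow_lt_rpow hL.le hc hβ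
    have hev : ∀ᶠ s in atTop, x < V (s * c) / V s :=
      (h4 c hc0).eventually_const_lt hcβ
    have hWc : Tendsto (fun t => W t * c) atTop atTop := hW.atTop_mul_const hc0
    filter_upwards [hVW, hmulx.eventually hVW, hW.eventually hev,
      hWc.eventually (eventually_ge_atTop S0),
      hW.eventually (eventually_gt_atTop 0),
      eventually_gt_atTop 0] with t h1 h2 h3 h5 h6 h7
    have hVWt : (0:ℝ) < V (W t) := h1.symm ▸ h7
    have key : V (W (t * x)) < V (W t * c) := by
      have := (lt_div_iff₀ hVWt).1 h3
      rw [h1] at this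
      rw [h2]; linarith
    have hlt : W (t * x) < W t * c := by
      by_contra hle
      push_neg at hle
      rcases eq_or_lt_of_le hle with h | h
      · rw [h] at key; exact lt_irrefl _ key
      · exact absurd key (not_lt.2 (hmono h5 h).le)
    rw [div_lt_iff₀ h6]; linarith
/-- `1 - F` is regularly varying at infinity with index `-α`
(`α > 0`) iff the tail quantile function `U t = Q (1 - 1/t)` is regularly
varying with index `1/α`. -/
theorem tail_regVarying_iff_tailQuantile_regVarying
    (F : ℝ → ℝ) (α : ℝ) (hα : 0 < α)
    (hFcont : Continuous F) (hFmono : StrictMono F)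
    (hFtail : ∀ x, F x < 1)
    (Q : ℝ → ℝ) (hQ : ∀ t, Q t = sInf {x | t ≤ F x})
    (U : ℝ → ℝ) (hU : ∀ t, U t = Q (1 - 1 / t)) :
    (∀ x > (0 : ℝ),
        Tendsto (fun t => (1 - F (t * x)) / (1 - F t)) atTop (nhds (x ^ (-α))))
      ↔ (∀ x > (0 : ℝ),
        Tendsto (fun t => U (t * x) / U t) atTop (nhds (x ^ (1 / α)))) := by
  set V : ℝ → ℝ := fun t => (1 - F t)⁻¹ with hVdef
  have hsub : ∀ t, 0 < 1 - F t := fun t => sub_pos.2 (hFtail t)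
  have hVpos : ∀ t, 0 < V t := fun t => inv_pos.2 (hsub t)
  have hVmono : StrictMono V := by
    intro s t hst
    exact inv_strictAnti₀ (hsub t) (by linarith [hFmono hst])
  have hFeq : ∀ t, F t = 1 - (V t)⁻¹ := by
    intro t; simp [hVdef]
  have hQF : ∀ s, Q (F s) = s := by
    intro s
    rw [hQ]
    have hset : {x | F s ≤ F x} = Set.Ici s := by
      ext y; simp [hFmono.le_iff_le]
    rw [hset, csInf_Ici]
  have hUV : ∀ s, U (V s) = s := by
    intro s
    rw [hU]
    have : 1 - 1 / V s = F s := by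
      rw [one_div, hVdef]; simp
    rw [this, hQF]
  -- conversion between the F-form and V-form of regular variation of the tail
  have hconv : ∀ x : ℝ, 0 < x →
      ((Tendsto (fun t => (1 - F (t * x)) / (1 - F t)) atTop (nhds (x ^ (-α)))) ↔
       (Tendsto (fun t => V (t * x) / V t) atTop (nhds (x ^ α)))) := by
    intro x hx
    have hne : x ^ (-α) ≠ 0 := (Real.rpow_pos_of_pos hx _).ne'
    have hne' : x ^ α ≠ 0 := (Real.rpow_pos_of_pos hx _).ne'
    have hfe : (fun t => V (t * x) / V t) = fun t => ((1 - F (t * x)) / (1 - F t))⁻¹ := by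
      funext t
      rw [hVdef]
      rw [inv_div_inv, inv_div]
    have hinv : (x ^ (-α))⁻¹ = x ^ α := by
      rw [Real.rpow_neg hx.le, inv_inv]
    constructor
    · intro h
      rw [hfe, ← hinv]
      exact h.inv₀ hne
    · intro h
      have hfe2 : (fun t => (1 - F (t * x)) / (1 - F t)) = fun t => (V (t * x) / V t)⁻¹ := by
        funext t
        rw [hVdef]
        simp only
        rw [inv_div_inv, inv_div]
      rw [hfe2, Real.rpow_neg hx.le]
      exact h.inv₀ hne'
  -- key consequences of `Tendsto V atTop atTop`
  have hkey : Tendsto V atTop atTop →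
      (∀ s, V 0 < s → V (U s) = s) ∧ Tendsto U atTop atTop := by
    intro hVtop
    have hVWs : ∀ s, V 0 < s → V (U s) = s := by
      intro s hs
      have hs0 : (0:ℝ) < s := (hVpos 0).trans hs
      obtain ⟨x1, hx1⟩ := (hVtop.eventually (eventually_gt_atTop s)).exists
      have hx1pos : (0:ℝ) < x1 := hVmono.lt_iff_lt.1 (hs.trans hx1)
      -- F 0 < 1 - 1/s < F x1
      have hcomp : ∀ t, V t < s → F t < 1 - 1 / s := by
        intro t ht
        rw [hFeq t, one_div, sub_lt_sub_iff_left]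
        exact inv_strictAnti₀ (hVpos t) ht
      have hcomp' : ∀ t, s < V t → 1 - 1 / s < F t := by
        intro t ht
        rw [hFeq t, one_div, sub_lt_sub_iff_left]
        exact inv_strictAnti₀ hs0 ht
      have h0 : F 0 < 1 - 1 / s := hcomp 0 hs
      have h1 : 1 - 1 / s < F x1 := hcomp' x1 hx1
      obtain ⟨x', _, hx'⟩ := intermediate_value_Icc hx1pos.le hFcont.continuousOn
        ⟨h0.le, h1.le⟩
      have hUs : U s = x' := by
        rw [hU, ← hx', hQF]
      rw [hUs, hVdef]
      simp only
      rw [hx', show (1:ℝ) - (1 - 1 / s) = 1 / s by ring, one_div, inv_inv]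
    refine ⟨hVWs, ?_⟩
    · rw [tendsto_atTop]
      intro b
      filter_upwards [eventually_gt_atTop (max (V 0) (V b))] with s hs
      have h1 : V (U s) = s := hVWs s (lt_of_le_of_lt (le_max_left _ _) hs)
      have h2 : V b < V (U s) := by
        rw [h1]; exact lt_of_le_of_lt (le_max_right _ _) hs
      exact (hVmono.lt_iff_lt.1 h2).le
  constructor
  · intro hF x hx
    have hVrv : ∀ x > (0:ℝ), Tendsto (fun t => V (t * x) / V t) atTop (nhds (x ^ α)) :=
      fun y hy => (hconv y hy).1 (hF y hy)
    have hVtop : Tendsto V atTop atTop := by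
      by_cases hbdd : BddAbove (Set.range V)
      · exfalso
        have hlim := tendsto_atTop_ciSup hVmono.monotone hbdd
        set L := ⨆ t, V t with hL
        have hLpos : 0 < L := lt_of_lt_of_le (hVpos 0) (le_ciSup hbdd 0)
        have hlim2 : Tendsto (fun t => V (t * 2)) atTop (nhds L) :=
          hlim.comp (tendsto_id.atTop_mul_const two_pos)
        have hdiv : Tendsto (fun t => V (t * 2) / V t) atTop (nhds (L / L)) :=
          hlim2.div hlim hLpos.ne'
        rw [div_self hLpos.ne'] at hdiv
        have h2α := hVrv 2 two_pos
        have heq : (1:ℝ) = (2:ℝ) ^ α := tendsto_nhds_unique hdiv h2α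
        have : (1:ℝ) < (2:ℝ) ^ α := by
          rw [Real.one_lt_rpow_iff_of_pos two_pos]
          exact Or.inl ⟨one_lt_two, hα⟩
        linarith
      · exact tendsto_atTop_atTop_of_monotone' hVmono.monotone hbdd
    obtain ⟨hVWs, hUtop⟩ := hkey hVtop
    have hVW : ∀ᶠ s in atTop, V (U s) = s := by
      filter_upwards [eventually_gt_atTop (V 0)] with s hs using hVWs s hs
    exact regVar_of_inverse V U α hα 0
      (fun s t _ hst => hVmono hst) hVW hUtop hVrv x hx
  · intro hUrv x hx
    have hVtop : Tendsto V atTop atTop := by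
      by_cases hbdd : BddAbove (Set.range V)
      · exfalso
        obtain ⟨B, hB⟩ := hbdd
        have hUzero : ∀ t : ℝ, B < t → U t = 0 := by
          intro t ht
          rw [hU, hQ]
          have hset : {x | 1 - 1 / t ≤ F x} = ∅ := by
            ext y
            simp only [Set.mem_setOf_eq, Set.mem_empty_iff_false, iff_false, not_le]
            have hVy : V y ≤ B := hB (Set.mem_range_self y)
            have ht0 : (0:ℝ) < t := (hVpos y).trans_le (hVy.trans ht.le)
            rw [hFeq y, one_div, sub_lt_sub_iff_left]
            exact inv_strictAnti₀ (hVpos y) (lt_of_le_of_lt hVy ht)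
          rw [hset, Real.sInf_empty]
        have h1 := hUrv 1 one_pos
        have h0 : Tendsto (fun t => U (t * 1) / U t) atTop (nhds 0) := by
          apply Tendsto.congr' _ tendsto_const_nhds
          filter_upwards [eventually_gt_atTop B] with t ht
          rw [mul_one, hUzero t ht, div_zero]
        have := tendsto_nhds_unique h0 h1
        rw [Real.one_rpow] at this
        linarith
      · exact tendsto_atTop_atTop_of_monotone' hVmono.monotone hbdd
    obtain ⟨hVWs, hUtop⟩ := hkey hVtop
    have hUmono : ∀ ⦃s t : ℝ⦄, V 0 + 1 ≤ s → s < t → U s < U t := by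
      intro s t hs hst
      have hs1 : V 0 < s := by linarith
      have hUs : V (U s) = s := hVWs s hs1
      have hUt : V (U t) = t := hVWs t (by linarith)
      by_contra hle
      push_neg at hle
      have : V (U t) ≤ V (U s) := hVmono.monotone hle
      rw [hUs, hUt] at this
      exact absurd hst (not_lt.2 this)
    have hVrv := regVar_of_inverse U V (1/α) (by positivity) (V 0 + 1)
      hUmono (Eventually.of_forall hUV) hVtop hUrv x hx
    rw [one_div_one_div] at hVrv
    exact (hconv x hx).2 hVrv
end

section
/- Suppose the tail of F satisfies Hall's condition: 1 - F(x) = c x^{-α} + d x^{-β} + o(x^{-β}) as x → ∞, with constants c > 0, d ≠ 0, and β > α > 0. Then the quantile function satisfies Q(1-s) = c^{1/α} s^{-1/α} (1 + α^{-1} c^{-β/α} d s^{β/α - 1} + o(s^{β/α - 1})) as s ↓ 0. -/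
open Filter Asymptotics Topology

/-- Under Hall's condition
`1 - F x = c x^(-α) + d x^(-β) + o(x^(-β))` as `x → ∞` with `c > 0`, `d ≠ 0`,
`β > α > 0`, the quantile function satisfies
`Q(1-s) = c^(1/α) s^(-1/α) (1 + α⁻¹ c^(-β/α) d s^(β/α-1) + o(s^(β/α-1)))`
as `s ↓ 0`. -/
theorem hall_quantile_expansion
    (F : ℝ → ℝ) (hFcont : Continuous F) (hFmono : StrictMono F)
    (Q : ℝ → ℝ) (hQ : ∀ t, Q t = sInf {x | t ≤ F x})
    (c d α β : ℝ) (hc : 0 < c) (hd : d ≠ 0) (hα : 0 < α) (hβ : α < β)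
    (hHall : (fun x => (1 - F x) - (c * x ^ (-α) + d * x ^ (-β)))
        =o[atTop] fun x => x ^ (-β)) :
    (fun s => Q (1 - s)
        - c ^ (1 / α) * s ^ (-(1 / α)) * (1 + α⁻¹ * c ^ (-(β / α)) * d * s ^ (β / α - 1)))
      =o[nhdsWithin 0 (Set.Ioi 0)]
        fun s => s ^ (-(1 / α)) * s ^ (β / α - 1) := by
  set l : Filter ℝ := nhdsWithin 0 (Set.Ioi 0) with hldef
  set γ : ℝ := β / α - 1 with hγdef
  set k : ℝ := α⁻¹ * c ^ (-(β / α)) * d with hkdef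
  have hβ0 : 0 < β := hα.trans hβ
  have hγ : 0 < γ := by
    have : 1 < β / α := (one_lt_div hα).2 hβ
    rw [hγdef]; linarith
  have hspos : ∀ᶠ s in l, 0 < s := by
    have h : Set.Ioi (0:ℝ) ∈ l := self_mem_nhdsWithin
    filter_upwards [h] with s hs using hs
  -- F tends to 1 at infinity
  have htail : Tendsto (fun x => 1 - F x) atTop (𝓝 0) := by
    have h1 : Tendsto (fun x : ℝ => c * x ^ (-α) + d * x ^ (-β)) atTop (𝓝 0) := by
      have ha := (tendsto_rpow_neg_atTop hα).const_mul c
      have hb := (tendsto_rpow_neg_atTop hβ0).const_mul d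
      simpa using ha.add hb
    have h2 : Tendsto (fun x => (1 - F x) - (c * x ^ (-α) + d * x ^ (-β))) atTop (𝓝 0) :=
      hHall.tendsto_zero_of_tendsto (tendsto_rpow_neg_atTop hβ0)
    have := h2.add h1
    simp only [sub_add_cancel, add_zero] at this
    exact this
  have hF1 : Tendsto F atTop (𝓝 1) := by
    have := htail.const_sub 1
    simpa using this
  have hFlt : ∀ x, F x < 1 := by
    intro x
    have hle : F (x + 1) ≤ 1 := by
      refine ge_of_tendsto hF1 ?_
      filter_upwards [eventually_ge_atTop (x + 1)] with z hz using hFmono.monotone hz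
    exact lt_of_lt_of_le (hFmono (lt_add_one x)) hle
  set s₀ : ℝ := 1 - F 0 with hs₀def
  have hs₀ : 0 < s₀ := by rw [hs₀def]; linarith [hFlt 0]
  -- the quantile solves F (Q (1-s)) = 1 - s for small s
  have hQF : ∀ s : ℝ, 0 < s → s < s₀ → F (Q (1 - s)) = 1 - s := by
    intro s hs hss
    obtain ⟨z, hz1, hz0⟩ : ∃ z, 1 - s ≤ F z ∧ (0:ℝ) ≤ z := by
      have h1 : ∀ᶠ z in atTop, 1 - s ≤ F z := hF1.eventually (eventually_ge_nhds (show 1 - s < 1 by linarith))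
      have h2 : ∀ᶠ z : ℝ in atTop, (0:ℝ) ≤ z := eventually_ge_atTop 0
      exact (h1.and h2).exists
    have hmem : (1 - s) ∈ Set.Icc (F 0) (F z) := by
      constructor
      · rw [hs₀def] at hss; linarith
      · exact hz1
    obtain ⟨y, _, hFy⟩ := intermediate_value_Icc hz0 hFcont.continuousOn hmem
    have hset : {x | 1 - s ≤ F x} = Set.Ici y := by
      ext t
      simp only [Set.mem_setOf_eq, Set.mem_Ici, ← hFy, hFmono.le_iff_le]
    rw [hQ, hset, csInf_Ici, hFy]
  set x : ℝ → ℝ := fun s => Q (1 - s) with hxdef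
  have h1ev : ∀ᶠ s in l, F (x s) = 1 - s := by
    have hIoo : Set.Ioo (0:ℝ) s₀ ∈ l := Ioo_mem_nhdsGT_of_mem ⟨le_refl 0, hs₀⟩
    filter_upwards [hIoo] with s hs using hQF s hs.1 hs.2
  have hxtop : Tendsto x l atTop := by
    rw [tendsto_atTop]
    intro M
    have hδ : 0 < min s₀ (1 - F M) := lt_min hs₀ (by linarith [hFlt M])
    have hmem : Set.Ioo (0:ℝ) (min s₀ (1 - F M)) ∈ l := Ioo_mem_nhdsGT_of_mem ⟨le_refl 0, hδ⟩
    filter_upwards [hmem] with s hs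
    have hFx : F (x s) = 1 - s := hQF s hs.1 (lt_of_lt_of_le hs.2 (min_le_left _ _))
    have hlt : F M < F (x s) := by
      rw [hFx]
      have := lt_of_lt_of_le hs.2 (min_le_right _ _)
      linarith
    exact (hFmono.lt_iff_lt.mp hlt).le
  have hxpos : ∀ᶠ s in l, 0 < x s := hxtop.eventually_gt_atTop 0
  -- the error function
  set E : ℝ → ℝ := fun y => ((1 - F y) - (c * y ^ (-α) + d * y ^ (-β))) / y ^ (-β) with hEdef
  have hEx : Tendsto (fun s => E (x s)) l (𝓝 0) :=
    hHall.tendsto_div_nhds_zero.comp hxtop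
  have h4 : ∀ᶠ s in l, s = c * (x s) ^ (-α) + (d + E (x s)) * (x s) ^ (-β) := by
    filter_upwards [h1ev, hxpos] with s hFx hx0
    have hne : (x s) ^ (-β) ≠ 0 := (Real.rpow_pos_of_pos hx0 _).ne'
    have hmul : E (x s) * (x s) ^ (-β)
        = (1 - F (x s)) - (c * (x s) ^ (-α) + d * (x s) ^ (-β)) := by
      rw [hEdef]; exact div_mul_cancel₀ _ hne
    rw [hFx] at hmul
    linear_combination -hmul
  -- normalized quantile
  set u : ℝ → ℝ := fun s => c ^ (-(1/α)) * (x s * s ^ (1/α)) with hudef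
  have hupos : ∀ᶠ s in l, 0 < u s := by
    filter_upwards [hxpos, hspos] with s hx0 hs0
    exact mul_pos (Real.rpow_pos_of_pos hc _) (mul_pos hx0 (Real.rpow_pos_of_pos hs0 _))
  have hxu : ∀ᶠ s in l, x s = c ^ (1/α) * s ^ (-(1/α)) * u s := by
    filter_upwards [hxpos, hspos] with s hx0 hs0
    have hcne : c ^ (1/α) ≠ 0 := (Real.rpow_pos_of_pos hc _).ne'
    have hsne : s ^ (1/α) ≠ 0 := (Real.rpow_pos_of_pos hs0 _).ne'
    rw [hudef, Real.rpow_neg hc.le, Real.rpow_neg hs0.le]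
    field_simp
  have hinv : 1 / α * α = 1 := one_div_mul_cancel hα.ne'
  have huα : ∀ᶠ s in l, (u s) ^ α = c⁻¹ * (s * (x s) ^ α) := by
    filter_upwards [hxpos, hspos] with s hx0 hs0
    rw [hudef]
    rw [Real.mul_rpow (Real.rpow_pos_of_pos hc _).le (mul_pos hx0 (Real.rpow_pos_of_pos hs0 _)).le,
      Real.mul_rpow hx0.le (Real.rpow_pos_of_pos hs0 _).le,
      ← Real.rpow_mul hc.le, ← Real.rpow_mul hs0.le, hinv, Real.rpow_one,
      neg_mul, hinv, Real.rpow_neg_one]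
    ring
  have hsxα : Tendsto (fun s => s * (x s) ^ α) l (𝓝 c) := by
    have heq : (fun s => s * (x s) ^ α) =ᶠ[l] fun s => c + (d + E (x s)) * (x s) ^ (α - β) := by
      filter_upwards [h4, hxpos] with s h4s hx0
      have e1 : (x s) ^ (-α) * (x s) ^ α = 1 := by
        rw [← Real.rpow_add hx0]; simp
      have e2 : (x s) ^ (-β) * (x s) ^ α = (x s) ^ (α - β) := by
        rw [← Real.rpow_add hx0]; ring_nf
      linear_combination (x s) ^ α * h4s + c * e1 + (d + E (x s)) * e2
    have hxab : Tendsto (fun s => (x s) ^ (α - β)) l (𝓝 0) := by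
      have h0 : Tendsto (fun y : ℝ => y ^ (-(β - α))) atTop (𝓝 0) :=
        tendsto_rpow_neg_atTop (by linarith)
      have := h0.comp hxtop
      simpa [neg_sub, Function.comp_def] using this
    have hlim : Tendsto (fun s => c + (d + E (x s)) * (x s) ^ (α - β)) l (𝓝 c) := by
      have := ((hEx.const_add d).mul hxab).const_add c
      simpa using this
    exact hlim.congr' heq.symm
  have hu1 : Tendsto u l (𝓝 1) := by
    have h := hsxα.const_mul c⁻¹
    rw [inv_mul_cancel₀ hc.ne'] at h
    have hcont : ContinuousAt (fun t : ℝ => t ^ (1/α)) 1 :=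
      Real.continuousAt_rpow_const 1 _ (Or.inl one_ne_zero)
    have h2 := hcont.tendsto.comp h
    rw [Real.one_rpow] at h2
    refine h2.congr' ?_
    filter_upwards [huα, hupos] with s hs hu0
    show (c⁻¹ * (s * (x s) ^ α)) ^ (1/α) = u s
    rw [← hs, ← Real.rpow_mul hu0.le, mul_one_div, div_self hα.ne', Real.rpow_one]
  set w : ℝ → ℝ := fun s => (u s) ^ (-α) with hwdef
  have hw1 : Tendsto w l (𝓝 1) := by
    have hcont : ContinuousAt (fun t : ℝ => t ^ (-α)) 1 :=
      Real.continuousAt_rpow_const 1 _ (Or.inl one_ne_zero)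
    have h2 := hcont.tendsto.comp hu1
    rw [Real.one_rpow] at h2
    exact h2
  have hws : ∀ᶠ s in l, w s * s = c * (x s) ^ (-α) := by
    filter_upwards [huα, hupos, hxpos, hspos] with s huαs hu0 hx0 hs0
    have hX : (0:ℝ) < (x s) ^ α := Real.rpow_pos_of_pos hx0 _
    rw [hwdef]
    show (u s) ^ (-α) * s = c * (x s) ^ (-α)
    rw [Real.rpow_neg hu0.le, huαs, Real.rpow_neg hx0.le]
    field_simp
  have h10 : ∀ᶠ s in l, w s - 1
      = -((d + E (x s)) * (c ^ (-(β / α)) * (u s) ^ (-β))) * s ^ γ := by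
    filter_upwards [hws, h4, hxu, hupos, hspos] with s hwss h4s hxus hu0 hs0
    have e2 : (x s) ^ (-β) = c ^ (-(β / α)) * s ^ (β / α) * (u s) ^ (-β) := by
      rw [hxus,
        Real.mul_rpow (mul_pos (Real.rpow_pos_of_pos hc _) (Real.rpow_pos_of_pos hs0 _)).le hu0.le,
        Real.mul_rpow (Real.rpow_pos_of_pos hc _).le (Real.rpow_pos_of_pos hs0 _).le,
        ← Real.rpow_mul hc.le, ← Real.rpow_mul hs0.le]
      rw [show 1 / α * -β = -(β / α) by ring, show -(1/α) * -β = β / α by ring]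
    have e3 : s ^ (β / α) = s ^ γ * s := by
      rw [hγdef, ← Real.rpow_add_one hs0.ne']
      rw [show β / α - 1 + 1 = β / α from by ring]
    have key : (w s - 1) * s
        = -((d + E (x s)) * (c ^ (-(β / α)) * (u s) ^ (-β))) * s ^ γ * s := by
      linear_combination hwss - h4s - (d + E (x s)) * e2
        - (d + E (x s)) * (c ^ (-(β / α)) * (u s) ^ (-β)) * e3
    exact mul_right_cancel₀ hs0.ne' key
  have hsγne : ∀ᶠ s in l, s ^ γ ≠ 0 := by
    filter_upwards [hspos] with s hs0 using (Real.rpow_pos_of_pos hs0 _).ne'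
  have huβ : Tendsto (fun s => (u s) ^ (-β)) l (𝓝 1) := by
    have hcont : ContinuousAt (fun t : ℝ => t ^ (-β)) 1 :=
      Real.continuousAt_rpow_const 1 _ (Or.inl one_ne_zero)
    have h2 := hcont.tendsto.comp hu1
    rw [Real.one_rpow] at h2
    exact h2
  have h11 : Tendsto (fun s => (w s - 1) / s ^ γ) l (𝓝 (-(d * c ^ (-(β / α))))) := by
    have base : Tendsto (fun s => -((d + E (x s)) * (c ^ (-(β / α)) * (u s) ^ (-β)))) l
        (𝓝 (-((d + 0) * (c ^ (-(β / α)) * 1)))) :=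
      ((hEx.const_add d).mul (huβ.const_mul _)).neg
    simp only [add_zero, mul_one] at base
    refine (base.congr' ?_)
    filter_upwards [h10, hsγne] with s h10s hne
    rw [eq_comm, h10s, mul_div_cancel_right₀ _ hne]
  have hwO : (fun s => w s - 1) =O[l] fun s => s ^ γ := by
    refine isBigO_of_div_tendsto_nhds ?_ _ h11
    filter_upwards [hsγne] with s hne h
    exact absurd h hne
  -- Taylor expansion of t ↦ t^(-(1/α)) at 1
  set A : ℝ → ℝ := fun t => t ^ (-(1/α)) - 1 - (t - 1) * (-α⁻¹) with hAdef
  have hA : A =o[𝓝 1] fun t => t - 1 := by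
    have hder : HasDerivAt (fun t : ℝ => t ^ (-(1/α))) (-(1/α) * (1:ℝ) ^ (-(1/α) - 1)) 1 :=
      Real.hasDerivAt_rpow_const (Or.inl one_ne_zero)
    rw [hasDerivAt_iff_isLittleO] at hder
    refine hder.congr' ?_ EventuallyEq.rfl
    refine Eventually.of_forall fun t => ?_
    rw [hAdef]
    simp only [Real.one_rpow, smul_eq_mul]
    ring_nf
  have hAw : (fun s => A (w s)) =o[l] fun s => w s - 1 := by
    have := hA.comp_tendsto hw1
    exact this
  have hAsγ : (fun s => A (w s)) =o[l] fun s => s ^ γ := hAw.trans_isBigO hwO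
  have hA0 : Tendsto (fun s => A (w s) / s ^ γ) l (𝓝 0) := by
    refine (isLittleO_iff_tendsto' ?_).mp hAsγ
    filter_upwards [hsγne] with s hne h
    exact absurd h hne
  have h17 : ∀ᶠ s in l, u s = (w s) ^ (-(1/α)) := by
    filter_upwards [hupos] with s hu0
    rw [hwdef]
    show u s = ((u s) ^ (-α)) ^ (-(1/α))
    rw [← Real.rpow_mul hu0.le, show -α * -(1/α) = 1 by field_simp, Real.rpow_one]
  have h18 : Tendsto (fun s => (u s - 1) / s ^ γ) l (𝓝 k) := by
    have heq : (fun s => (u s - 1) / s ^ γ)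
        =ᶠ[l] fun s => A (w s) / s ^ γ + (-α⁻¹) * ((w s - 1) / s ^ γ) := by
      filter_upwards [h17] with s h17s
      have hu1' : u s - 1 = A (w s) + (w s - 1) * (-α⁻¹) := by
        rw [hAdef]
        simp only
        rw [← h17s]
        ring
      rw [hu1']
      ring
    have hlim := hA0.add (h11.const_mul (-α⁻¹))
    rw [show (0:ℝ) + -α⁻¹ * -(d * c ^ (-(β / α))) = k by rw [hkdef]; ring] at hlim
    exact hlim.congr' heq.symm
  -- conclude
  have hgne : ∀ᶠ s in l, s ^ (-(1/α)) * s ^ γ ≠ 0 := by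
    filter_upwards [hspos] with s hs0
    exact mul_ne_zero (Real.rpow_pos_of_pos hs0 _).ne' (Real.rpow_pos_of_pos hs0 _).ne'
  rw [isLittleO_iff_tendsto' (by filter_upwards [hgne] with s h h'; exact absurd h' h)]
  have heq : (fun s =>
      (x s - c ^ (1/α) * s ^ (-(1/α)) * (1 + k * s ^ γ)) / (s ^ (-(1/α)) * s ^ γ))
        =ᶠ[l] fun s => c ^ (1/α) * ((u s - 1) / s ^ γ - k) := by
    filter_upwards [hxu, hspos] with s hxus hs0
    have hne1 : s ^ (-(1/α)) ≠ 0 := (Real.rpow_pos_of_pos hs0 _).ne'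
    have hne2 : s ^ γ ≠ 0 := (Real.rpow_pos_of_pos hs0 _).ne'
    rw [hxus]
    field_simp
    ring
  have hfinal : Tendsto
      (fun s => (x s - c ^ (1/α) * s ^ (-(1/α)) * (1 + k * s ^ γ)) / (s ^ (-(1/α)) * s ^ γ))
      l (𝓝 0) := by
    have := (h18.sub (tendsto_const_nhds (x := k))).const_mul (c ^ (1/α))
    rw [sub_self, mul_zero] at this
    exact this.congr' heq.symm
  exact hfinal
end

section
/- If U(t) = c^{1/α} t^{1/α}(1 + α^{-1} c^{-β/α} d t^{1-β/α} + o(t^{1-β/α})) as t → ∞ with c > 0, d ≠ 0, β > α > 0, then for every x > 0, lim_{t→∞} [log(U(tx)/U(t)) - α^{-1} log x] / A₁(t) = (x^{1-β/α} - 1)/(1 - β/α), where A₁(t) = d α^{-1} (1 - β/α) c^{-β/α} t^{1-β/α}. -/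
open Filter Asymptotics

/-- If
`U t = c^(1/α) t^(1/α)(1 + α⁻¹ c^(-β/α) d t^(1-β/α) + o(t^(1-β/α)))` as `t → ∞`
with `c > 0`, `d ≠ 0`, `β > α > 0`, then for every `x > 0`,
`(log(U(tx)/U t) - α⁻¹ log x)/A₁ t → (x^(1-β/α)-1)/(1-β/α)`,
where `A₁ t = d α⁻¹ (1-β/α) c^(-β/α) t^(1-β/α)`. -/
theorem second_order_condition_of_U_expansion
    (U : ℝ → ℝ) (c d α β : ℝ) (hc : 0 < c) (hd : d ≠ 0) (hα : 0 < α) (hβ : α < β)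
    (hU : (fun t => U t
        - c ^ (1 / α) * t ^ (1 / α) * (1 + α⁻¹ * c ^ (-(β / α)) * d * t ^ (1 - β / α)))
      =o[atTop] fun t => t ^ (1 / α) * t ^ (1 - β / α))
    (A₁ : ℝ → ℝ)
    (hA₁ : ∀ t, A₁ t = d * α⁻¹ * (1 - β / α) * c ^ (-(β / α)) * t ^ (1 - β / α)) :
    ∀ x > (0 : ℝ),
      Tendsto (fun t => (Real.log (U (t * x) / U t) - α⁻¹ * Real.log x) / A₁ t)
        atTop (nhds ((x ^ (1 - β / α) - 1) / (1 - β / α))) := by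
  intro x hx
  set γ : ℝ := 1 - β / α with hγdef
  have hαβ : 1 < β / α := (one_lt_div hα).mpr hβ
  have hγ : γ < 0 := by rw [hγdef]; linarith
  have hγne : γ ≠ 0 := ne_of_lt hγ
  set k : ℝ := α⁻¹ * c ^ (-(β / α)) * d with hkdef
  have hk : k ≠ 0 :=
    mul_ne_zero (mul_ne_zero (inv_ne_zero (ne_of_gt hα))
      (ne_of_gt (Real.rpow_pos_of_pos hc _))) hd
  have hC : (0 : ℝ) < c ^ (1 / α) := Real.rpow_pos_of_pos hc _
  -- tendsto of tx to atTop
  have hmulx : Tendsto (fun t : ℝ => t * x) atTop atTop :=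
    Tendsto.atTop_mul_const hx tendsto_id
  -- t^γ → 0
  have hg0 : Tendsto (fun t : ℝ => t ^ γ) atTop (nhds 0) := by
    have := tendsto_rpow_neg_atTop (show (0 : ℝ) < β / α - 1 by linarith)
    simpa [neg_sub] using this
  -- the remainder function
  set f : ℝ → ℝ := fun t => U t / (c ^ (1 / α) * t ^ (1 / α)) - (1 + k * t ^ γ) with hfdef
  have hfU : ∀ t : ℝ, 0 < t → U t = c ^ (1 / α) * t ^ (1 / α) * (1 + k * t ^ γ + f t) := by
    intro t ht
    have hT : (0 : ℝ) < t ^ (1 / α) := Real.rpow_pos_of_pos ht _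
    rw [hfdef]
    have h1 : 1 + k * t ^ γ + (U t / (c ^ (1 / α) * t ^ (1 / α)) - (1 + k * t ^ γ))
        = U t / (c ^ (1 / α) * t ^ (1 / α)) := by ring
    rw [h1]
    field_simp
  -- f t / t^γ → 0
  have hf : Tendsto (fun t => f t / t ^ γ) atTop (nhds 0) := by
    have h1 := hU.tendsto_div_nhds_zero
    have h2 := h1.div_const (c ^ (1 / α))
    rw [zero_div] at h2
    refine h2.congr' ?_
    filter_upwards [eventually_gt_atTop (0 : ℝ)] with t ht
    have hT : (0 : ℝ) < t ^ (1 / α) := Real.rpow_pos_of_pos ht _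
    have hG : (0 : ℝ) < t ^ γ := Real.rpow_pos_of_pos ht _
    rw [hfdef]
    field_simp
  -- f → 0
  have hf0 : Tendsto f atTop (nhds 0) := by
    have := hf.mul hg0
    rw [mul_zero] at this
    refine this.congr' ?_
    filter_upwards [eventually_gt_atTop (0 : ℝ)] with t ht
    have hG : (0 : ℝ) < t ^ γ := Real.rpow_pos_of_pos ht _
    field_simp
  -- w := k t^γ + f t, so U t = C t^(1/α) (1 + w t) for t > 0
  set w : ℝ → ℝ := fun t => k * t ^ γ + f t with hwdef
  have hw0 : Tendsto w atTop (nhds 0) := by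
    have := ((hg0.const_mul k).add hf0)
    simpa using this
  have hwdiv : Tendsto (fun t => w t / t ^ γ) atTop (nhds k) := by
    have h := (tendsto_const_nhds (x := k) (f := atTop)).add hf
    rw [add_zero] at h
    refine h.congr' ?_
    filter_upwards [eventually_gt_atTop (0 : ℝ)] with t ht
    have hG : (0 : ℝ) ≠ t ^ γ := ne_of_lt (Real.rpow_pos_of_pos ht _)
    rw [hwdef]
    field_simp
  -- log(1+u) - u = o(u) at 0
  have hlog : (fun u : ℝ => Real.log (1 + u) - u) =o[nhds 0] (fun u => u) := by
    have h : HasDerivAt (fun u : ℝ => Real.log (1 + u)) 1 0 := by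
      have h1 : HasDerivAt Real.log 1⁻¹ (1 + 0 : ℝ) := by
        rw [add_zero]; exact Real.hasDerivAt_log one_ne_zero
      have h2 : HasDerivAt (fun u : ℝ => 1 + u) 1 0 := by
        simpa using (hasDerivAt_id (0 : ℝ)).const_add (1 : ℝ)
      have h3 := h1.comp 0 h2
      simp only [inv_one, mul_one] at h3
      exact h3
    have := hasDerivAt_iff_isLittleO.mp h
    simpa using this
  -- L t := log (1 + w t)
  set L : ℝ → ℝ := fun t => Real.log (1 + w t) with hLdef
  have hLo : (fun t => L t - w t) =o[atTop] fun t => t ^ γ := by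
    have h1 : (fun t => L t - w t) =o[atTop] w := by
      have := hlog.comp_tendsto hw0
      exact this
    refine h1.trans_isBigO ?_
    refine Asymptotics.isBigO_of_div_tendsto_nhds ?_ k ?_
    · filter_upwards [eventually_gt_atTop (0 : ℝ)] with t ht h
      exact absurd h (ne_of_gt (Real.rpow_pos_of_pos ht _))
    · exact hwdiv
  have hL : Tendsto (fun t => L t / t ^ γ) atTop (nhds k) := by
    have h1 := hLo.tendsto_div_nhds_zero
    have := h1.add hwdiv
    rw [zero_add] at this
    refine this.congr ?_
    intro t
    rw [← add_div, sub_add_cancel]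
  -- composed with t ↦ t * x
  have hLx : Tendsto (fun t => L (t * x) / t ^ γ) atTop (nhds (k * x ^ γ)) := by
    have h1 := (hL.comp hmulx).mul_const (x ^ γ)
    refine h1.congr' ?_
    filter_upwards [eventually_gt_atTop (0 : ℝ)] with t ht
    have htx : (t * x) ^ γ = t ^ γ * x ^ γ := Real.mul_rpow ht.le hx.le
    have hG : (0 : ℝ) < t ^ γ := Real.rpow_pos_of_pos ht _
    have hX : (0 : ℝ) < x ^ γ := Real.rpow_pos_of_pos hx _
    simp only [Function.comp, htx]
    field_simp
  have hmain : Tendsto (fun t => (L (t * x) - L t) / (k * γ * t ^ γ)) atTop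
      (nhds ((x ^ γ - 1) / γ)) := by
    have h1 := (hLx.sub hL).div_const (k * γ)
    have hval : (k * x ^ γ - k) / (k * γ) = (x ^ γ - 1) / γ := by
      field_simp
    rw [hval] at h1
    refine h1.congr ?_
    intro t
    rw [sub_div]
    rw [div_div, div_div]
    ring_nf
  -- final: eventual equality
  refine hmain.congr' ?_
  have hev1 : ∀ᶠ t in atTop, -1 < w t := hw0.eventually (eventually_gt_nhds (by norm_num))
  have hev2 : ∀ᶠ t in atTop, -1 < w (t * x) := hmulx.eventually hev1
  filter_upwards [eventually_gt_atTop (0 : ℝ), hev1, hev2] with t ht hw1 hw2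
  have htx : 0 < t * x := mul_pos ht hx
  have hT : (0 : ℝ) < t ^ (1 / α) := Real.rpow_pos_of_pos ht _
  have hTX : (0 : ℝ) < (t * x) ^ (1 / α) := Real.rpow_pos_of_pos htx _
  have hG : (0 : ℝ) < t ^ γ := Real.rpow_pos_of_pos ht _
  have h1w : (0 : ℝ) < 1 + w t := by linarith
  have h1wx : (0 : ℝ) < 1 + w (t * x) := by linarith
  have hUt : U t = c ^ (1 / α) * t ^ (1 / α) * (1 + w t) := by
    rw [hwdef]; rw [hfU t ht]; ring_nf
  have hUtx : U (t * x) = c ^ (1 / α) * (t * x) ^ (1 / α) * (1 + w (t * x)) := by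
    rw [hwdef]; rw [hfU (t * x) htx]; ring_nf
  have hUtpos : 0 < U t := by rw [hUt]; positivity
  have hUtxpos : 0 < U (t * x) := by rw [hUtx]; positivity
  have hratio : U (t * x) / U t = x ^ (1 / α) * ((1 + w (t * x)) / (1 + w t)) := by
    rw [hUt, hUtx, Real.mul_rpow ht.le hx.le]
    field_simp
  have hlogx : Real.log (x ^ (1 / α)) = α⁻¹ * Real.log x := by
    rw [Real.log_rpow hx]; rw [one_div]
  have hX1 : (0 : ℝ) < x ^ (1 / α) := Real.rpow_pos_of_pos hx _
  have hA : A₁ t = k * γ * t ^ γ := by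
    rw [hA₁ t, hkdef, hγdef]; ring
  rw [hA, hratio, Real.log_mul (ne_of_gt hX1) (ne_of_gt (div_pos h1wx h1w)),
    Real.log_div (ne_of_gt h1wx) (ne_of_gt h1w), hlogx, hLdef]
  ring_nf
end
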